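/- For a singular m-simplex τ in a space X, the augmentation ε : C_0^q(X) → ℤ[q] sending Σ a_i x_i to Σ a_i satisfies ε(∂^m(τ)) = [m+1]_q!. In particular, for m = N-1, ε(∂^{N-1}(τ)) = 0. -/

import Mathlib

open Finset
open scoped NNReal

noncomputable section

/-- The q-integer `[k]_q = 1 + q + ... + q^(k-1)`. -/
def qInt (q : ℂ) (k : ℕ) : ℂ := ∑ i ∈ Finset.range k, q ^ i

/-- The q-factorial `[k]_q! = [1]_q [2]_q ⋯ [k]_q`. -/
def qFac (q : ℂ) (k : ℕ) : ℂ := ∏ i ∈ Finset.range k, qInt q (i + 1)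


/-- The standard topological `n`-simplex. -/
def TopSimplex (n : ℕ) : Type := {f : Fin (n + 1) → ℝ≥0 // ∑ i, f i = 1}

instance (n : ℕ) : TopologicalSpace (TopSimplex n) :=
  instTopologicalSpaceSubtype

/-- The affine inclusion `Δ^n → Δ^{n+1}` omitting the `i`-th vertex. -/
def faceIncl {n : ℕ} (i : Fin (n + 2)) : C(TopSimplex n, TopSimplex (n + 1)) where
  toFun f := ⟨fun j => ∑ k ∈ Finset.univ.filter (fun k : Fin (n + 1) => i.succAbove k = j),
      f.1 k, by
    have := Finset.sum_fiberwise_of_maps_to (g := fun k : Fin (n + 1) => i.succAbove k)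
      (fun k (_ : k ∈ Finset.univ) => Finset.mem_univ (i.succAbove k)) f.1
    rw [this]
    exact f.2⟩
  continuous_toFun := by
    apply Continuous.subtype_mk
    exact continuous_pi fun j =>
      continuous_finset_sum _ fun k _ => (continuous_apply k).comp continuous_subtype_val

/-- A singular `n`-simplex in `X`. -/
abbrev SSimplex (n : ℕ) (X : Type) [TopologicalSpace X] := C(TopSimplex n, X)

/-- The `i`-th face of a singular `(n+1)`-simplex. -/
def sFace {X : Type} [TopologicalSpace X] {n : ℕ} (i : Fin (n + 2)) (σ : SSimplex (n + 1) X) :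
    SSimplex n X :=
  σ.comp (faceIncl i)


/-- The total module of singular q-chains, with coefficients in `ℂ ⊇ ℤ[q]`. -/
abbrev QChains (X : Type) [TopologicalSpace X] : Type := (Σ n : ℕ, SSimplex n X) →₀ ℂ

/-- A singular simplex, as a q-chain. -/
def toCh {X : Type} [TopologicalSpace X] {n : ℕ} (σ : SSimplex n X) : QChains X :=
  Finsupp.single ⟨n, σ⟩ 1

/-- The q-analog border map `∂ = ∑ᵢ qⁱ ∂ᵢ` on singular q-chains. -/
def qBorder (q : ℂ) (X : Type) [TopologicalSpace X] : QChains X →ₗ[ℂ] QChains X :=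
  Finsupp.lsum ℂ fun s =>
    match s with
    | ⟨0, _⟩ => 0
    | ⟨n + 1, σ⟩ => ∑ i : Fin (n + 2),
        q ^ (i : ℕ) • Finsupp.lsingle (⟨n, sFace i σ⟩ : Σ n : ℕ, SSimplex n X)


/-- The augmentation `ε`, summing the coefficients of the degree-0 part of a q-chain. -/
def aug (X : Type) [TopologicalSpace X] : QChains X →ₗ[ℂ] ℂ :=
  Finsupp.lsum ℂ fun s => if s.1 = 0 then LinearMap.id else 0

lemma qFac_succ (q : ℂ) (k : ℕ) : qFac q (k + 1) = qInt q (k + 1) * qFac q k := by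
  rw [qFac, prod_range_succ, mul_comm, qFac]

lemma qFac_eq_zero_of_isPrimitiveRoot {q : ℂ} {N n : ℕ} (hq : IsPrimitiveRoot q N)
    (hN : 1 < N) (hn : N ≤ n) : qFac q n = 0 :=
  prod_eq_zero (i := N - 1) (mem_range.mpr (by omega)) <| by
    rw [Nat.sub_add_cancel hN.le]
    exact hq.geom_sum_eq_zero hN

lemma qBorder_toCh (q : ℂ) {X : Type} [TopologicalSpace X] {n : ℕ} (σ : SSimplex (n + 1) X) :
    qBorder q X (toCh σ) = ∑ i : Fin (n + 2), q ^ (i : ℕ) • toCh (sFace i σ) := by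
  simp [qBorder, toCh]

lemma aug_toCh_zero {X : Type} [TopologicalSpace X] (σ : SSimplex 0 X) : aug X (toCh σ) = 1 := by
  simp [aug, toCh]

/-- Each of the `m + 2` faces contributes `[m+1]_q!` by induction, weighted by `qⁱ`; the weights
sum to `[m+2]_q`. -/
theorem aug_qBorder_pow_toCh (q : ℂ) {X : Type} [TopologicalSpace X] :
    ∀ (m : ℕ) (τ : SSimplex m X), aug X ((qBorder q X ^ m) (toCh τ)) = qFac q (m + 1)
  | 0, τ => by simp [aug_toCh_zero, qFac, qInt]
  | m + 1, τ => by
    rw [pow_succ, Module.End.mul_apply, qBorder_toCh, map_sum, map_sum]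
    simp only [map_smul, aug_qBorder_pow_toCh q m, smul_eq_mul, ← sum_mul]
    rw [Fin.sum_univ_eq_sum_range (q ^ ·), qFac_succ (k := m + 1)]
    rfl

/-- `ε(∂^m(τ)) = [m+1]_q!`; in particular `ε(∂^{N-1}(τ)) = 0`. -/
theorem aug_border_pow (N : ℕ) (hN : N.Prime) (q : ℂ) (hq : IsPrimitiveRoot q N)
    (X : Type) [TopologicalSpace X] (m : ℕ) (τ : SSimplex m X) :
    aug X ((qBorder q X ^ m) (toCh τ)) = qFac q (m + 1) ∧
      (∀ τ' : SSimplex (N - 1) X, aug X ((qBorder q X ^ (N - 1)) (toCh τ')) = 0) := by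
  refine ⟨aug_qBorder_pow_toCh q m τ, fun τ' => ?_⟩
  rw [aug_qBorder_pow_toCh q (N - 1) τ']
  exact qFac_eq_zero_of_isPrimitiveRoot hq hN.one_lt (by omega)
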